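/- arXiv:2005.02899 — 2 statements merged into one kernel-verified Lean document; each statement's English description precedes it below -/
import Mathlib

section
/- (Russo's formula) Let A be an increasing event in Bernoulli bond percolation depending only on finitely many edges. Then the map p ↦ P_p[A] is differentiable and d/dp P_p[A] = Σ_{e ∈ E} P_p[e is pivotal for A]. -/
open MeasureTheory

/-- Vertices of the lattice `ℤ^d`. -/
abbrev Vertex (d : ℕ) := Fin d → ℤ

/-- Nearest-neighbour edges of `ℤ^d`: the pair `(v, i)` represents the edge
`{v, v + e_i}` where `e_i` is the `i`-th unit vector. -/
abbrev Edge (d : ℕ) := (Fin d → ℤ) × Fin d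

/-- A percolation configuration: each edge is open (`true`) or closed (`false`). -/
abbrev Config (d : ℕ) := Edge d → Bool

/-- `u` and `v` are joined by an open edge in the configuration `ω`. -/
def openAdj {d : ℕ} (ω : Config d) (u v : Vertex d) : Prop :=
  (∃ i, v = u + Pi.single i 1 ∧ ω (u, i) = true) ∨
  (∃ i, u = v + Pi.single i 1 ∧ ω (v, i) = true)

/-- `x ↔ y`: there is a finite path of open edges joining `x` and `y`. -/
def Conn {d : ℕ} (ω : Config d) (x y : Vertex d) : Prop :=
  Relation.ReflTransGen (openAdj ω) x y
open ENNReal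
/-- `P` is the family of Bernoulli bond percolation measures: for `p ∈ [0,1]`,
`P p` is the product of Bernoulli(`p`) measures on the edges. -/
def IsBernoulliFamily {d : ℕ} (P : ℝ → Measure (Config d)) : Prop :=
  (∀ p, IsProbabilityMeasure (P p)) ∧
  ∀ p ∈ Set.Icc (0 : ℝ) 1, ∀ (S : Finset (Edge d)) (f : Edge d → Bool),
    P p {ω | ∀ e ∈ S, ω e = f e} =
      ∏ e ∈ S, ENNReal.ofReal (if f e then p else 1 - p)

/-- `A` depends only on the edges in the finite set `S`. -/
def EventDependsOn {d : ℕ} (A : Set (Config d)) (S : Finset (Edge d)) : Prop :=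
  ∀ ω ω' : Config d, (∀ e ∈ S, ω e = ω' e) → (ω ∈ A ↔ ω' ∈ A)

/-- The configuration obtained from `ω` by flipping the state of the edge `e`. -/
def flipEdge {d : ℕ} (e : Edge d) (ω : Config d) : Config d :=
  Function.update ω e (!(ω e))

/-- The event that the edge `e` is pivotal for `A`: flipping the state of `e`
changes whether `A` occurs. -/
def Pivotal {d : ℕ} (A : Set (Config d)) (e : Edge d) : Set (Config d) :=
  {ω | ¬ (ω ∈ A ↔ flipEdge e ω ∈ A)}

/-- An event is increasing if it is preserved under opening more edges. -/
def IncreasingEvent {d : ℕ} (A : Set (Config d)) : Prop :=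
  ∀ ⦃ω ω' : Config d⦄, ω ≤ ω' → ω ∈ A → ω' ∈ A

/-! Conditioning on the edges of `S`, `P_q[A]` is the polynomial
`∑_{g ∈ B} ∏_{e ∈ S} q^{g e} (1 - q)^{1 - g e}`, where `B ⊆ {0,1}^S` is the increasing set of
patterns whose extension by closed edges lies in `A`. Differentiating edge by edge, the `e`-th
term pairs each pattern with its flip at `e`: the two contributions cancel unless exactly one of
them lies in `B`, which (as `B` is increasing) happens exactly when `e` is pivotal, and averaging
over the pair turns what is left into the weight of the pivotal patterns because
`q + (1 - q) = 1`. -/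

open Finset Function

section BoolCube

variable {ι : Type*} [DecidableEq ι]

def flipAt (i : ι) (g : ι → Bool) : ι → Bool :=
  update g i (!g i)

theorem flipAt_involutive (i : ι) : Involutive (flipAt i) := fun g => by
  simp [flipAt, update_idem]

theorem flipAt_apply_self (i : ι) (g : ι → Bool) : flipAt i g i = !g i :=
  update_self _ _ _

theorem flipAt_apply_of_ne {i j : ι} (h : j ≠ i) (g : ι → Bool) : flipAt i g j = g j :=
  update_of_ne h _ _

theorem flipAt_le_self {i : ι} {g : ι → Bool} (h : g i = true) : flipAt i g ≤ g := by
  simp [flipAt, h]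

theorem le_flipAt_self {i : ι} {g : ι → Bool} (h : g i = false) : g ≤ flipAt i g := by
  simp [flipAt, h]

def pivotalSet (B : Set (ι → Bool)) (i : ι) : Set (ι → Bool) :=
  {g | ¬ (g ∈ B ↔ flipAt i g ∈ B)}

theorem flipAt_mem_pivotalSet {B : Set (ι → Bool)} {i : ι} {g : ι → Bool} :
    flipAt i g ∈ pivotalSet B i ↔ g ∈ pivotalSet B i := by
  simp only [pivotalSet, Set.mem_ofPred_eq, flipAt_involutive i g]
  tauto

def boolWeight (q : ℝ) (b : Bool) : ℝ :=
  if b then q else 1 - q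

theorem boolWeight_add_boolWeight_not (q : ℝ) (b : Bool) :
    boolWeight q b + boolWeight q (!b) = 1 := by
  cases b <;> simp [boolWeight]

theorem hasDerivAt_boolWeight (b : Bool) (q : ℝ) :
    HasDerivAt (boolWeight · b) (if b then 1 else -1) q := by
  cases b
  · simpa [boolWeight] using (hasDerivAt_id' q).const_sub 1
  · simpa [boolWeight] using hasDerivAt_id' q

variable [Fintype ι]

theorem two_mul_sum_eq_sum_add_flipAt {M : Type*} [NonAssocSemiring M] (i : ι)
    (F : (ι → Bool) → M) :
    2 * ∑ g, F g = ∑ g, (F g + F (flipAt i g)) := by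
  rw [sum_add_distrib, two_mul]
  congr 1
  exact (Equiv.sum_comp ((flipAt_involutive i).toPerm _) F).symm

def bernoulliWeight (q : ℝ) (g : ι → Bool) : ℝ :=
  ∏ i, boolWeight q (g i)

noncomputable def bernoulliProb (q : ℝ) (B : Set (ι → Bool)) : ℝ :=
  ∑ g, B.indicator (bernoulliWeight q) g

theorem hasDerivAt_bernoulliWeight (g : ι → Bool) (q : ℝ) :
    HasDerivAt (bernoulliWeight · g)
      (∑ i, (∏ j ∈ univ.erase i, boolWeight q (g j)) * if g i then 1 else -1) q := by
  simpa [bernoulliWeight] using HasDerivAt.fun_finsetProd fun i _ => hasDerivAt_boolWeight (g i) q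

theorem sum_indicator_partialDeriv_eq_bernoulliProb_pivotalSet {B : Set (ι → Bool)}
    (hB : IsUpperSet B) (i : ι) (q : ℝ) :
    ∑ g, B.indicator
        (fun g => (∏ j ∈ univ.erase i, boolWeight q (g j)) * if g i then 1 else -1) g =
      bernoulliProb q (pivotalSet B i) := by
  classical
  set R : (ι → Bool) → ℝ := fun g => ∏ j ∈ univ.erase i, boolWeight q (g j)
  have hR (g) : R (flipAt i g) = R g :=
    prod_congr rfl fun j hj => by rw [flipAt_apply_of_ne (ne_of_mem_erase hj)]
  have hweight (g) : bernoulliWeight q g = boolWeight q (g i) * R g :=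
    (mul_prod_erase _ _ (mem_univ i)).symm
  suffices 2 * ∑ g, B.indicator (fun g => R g * if g i then 1 else -1) g =
        ∑ g, (pivotalSet B i).indicator R g ∧
      2 * bernoulliProb q (pivotalSet B i) = ∑ g, (pivotalSet B i).indicator R g by
    linarith
  constructor
  · rw [two_mul_sum_eq_sum_add_flipAt i]
    refine sum_congr rfl fun g _ => ?_
    have hup : (g i = true → flipAt i g ∈ B → g ∈ B) ∧
        (g i = false → g ∈ B → flipAt i g ∈ B) :=
      ⟨fun hg => @hB _ _ (flipAt_le_self hg), fun hg => @hB _ _ (le_flipAt_self hg)⟩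
    rcases Bool.eq_false_or_eq_true (g i) with hg | hg <;>
      by_cases h1 : g ∈ B <;> by_cases h2 : flipAt i g ∈ B <;>
      simp_all [pivotalSet, flipAt_apply_self]
  · rw [bernoulliProb, two_mul_sum_eq_sum_add_flipAt i]
    refine sum_congr rfl fun g _ => ?_
    simp only [Set.indicator_apply, flipAt_mem_pivotalSet, hweight, hR, flipAt_apply_self]
    split_ifs
    · linear_combination R g * boolWeight_add_boolWeight_not q (g i)
    · ring

theorem hasDerivAt_bernoulliProb {B : Set (ι → Bool)} (hB : IsUpperSet B) (q : ℝ) :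
    HasDerivAt (bernoulliProb · B) (∑ i, bernoulliProb q (pivotalSet B i)) q := by
  classical
  simp_rw [← sum_indicator_partialDeriv_eq_bernoulliProb_pivotalSet hB, Set.indicator_apply]
  rw [sum_comm]
  refine HasDerivAt.fun_sum fun g _ => ?_
  by_cases hg : g ∈ B
  · simpa [Set.indicator_apply, hg, sum_ite_irrel] using hasDerivAt_bernoulliWeight g q
  · simpa [Set.indicator_apply, hg] using hasDerivAt_const q (0 : ℝ)

end BoolCube

section Extension

variable {α : Type*} [DecidableEq α]

def extendByFalse (S : Finset α) (g : S → Bool) : α → Bool :=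
  fun a => if h : a ∈ S then g ⟨a, h⟩ else false

theorem extendByFalse_apply_coe (S : Finset α) (g : S → Bool) (i : S) :
    extendByFalse S g i = g i := by
  simp [extendByFalse]

theorem extendByFalse_restrict_apply (S : Finset α) (ω : α → Bool) {a : α} (ha : a ∈ S) :
    extendByFalse S (S.restrict ω) a = ω a := by
  simp [extendByFalse, ha]

theorem monotone_extendByFalse (S : Finset α) : Monotone (extendByFalse S) := by
  intro g g' h a
  unfold extendByFalse
  split_ifs
  exacts [h _, le_rfl]

end Extension

section Percolation

variable {d : ℕ}

theorem extendByFalse_flipAt (S : Finset (Edge d)) (g : S → Bool) (i : S) :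
    extendByFalse S (flipAt i g) = flipEdge i (extendByFalse S g) := by
  funext e
  by_cases he : e = i
  · subst he
    simp [flipEdge, extendByFalse_apply_coe, flipAt_apply_self]
  · rw [flipEdge, update_of_ne he]
    unfold extendByFalse
    split_ifs with heS
    · exact flipAt_apply_of_ne (fun h => he (congrArg Subtype.val h)) g
    · rfl

theorem preimage_extendByFalse_pivotal (A : Set (Config d)) (S : Finset (Edge d)) (i : S) :
    extendByFalse S ⁻¹' Pivotal A i = pivotalSet (extendByFalse S ⁻¹' A) i := by
  ext g
  simp [Pivotal, pivotalSet, extendByFalse_flipAt]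

theorem EventDependsOn.pivotal {A : Set (Config d)} {S : Finset (Edge d)}
    (hS : EventDependsOn A S) (e : Edge d) : EventDependsOn (Pivotal A e) S := by
  intro ω ω' h
  have hflip : ∀ e' ∈ S, flipEdge e ω e' = flipEdge e ω' e' := by
    intro e' he'
    by_cases hee : e' = e
    · subst hee; simp [flipEdge, h e' he']
    · simp [flipEdge, update_of_ne hee, h e' he']
  simp only [Pivotal, Set.mem_ofPred_eq, hS ω ω' h, hS _ _ hflip]

theorem EventDependsOn.pivotal_eq_empty {A : Set (Config d)} {S : Finset (Edge d)}
    (hS : EventDependsOn A S) {e : Edge d} (he : e ∉ S) : Pivotal A e = ∅ := by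
  refine Set.eq_empty_of_forall_notMem fun ω hω => hω (hS ω _ fun e' he' => ?_)
  exact (update_of_ne (ne_of_mem_of_not_mem he' he) _ _).symm

theorem EventDependsOn.eq_preimage_restrict {A : Set (Config d)} {S : Finset (Edge d)}
    (hS : EventDependsOn A S) : A = S.restrict ⁻¹' (extendByFalse S ⁻¹' A) := by
  ext ω
  exact hS _ _ fun e he => (extendByFalse_restrict_apply S ω he).symm

theorem IsBernoulliFamily.toReal_measure_preimage_restrict {P : ℝ → Measure (Config d)}
    (hP : IsBernoulliFamily P) {q : ℝ} (hq : q ∈ Set.Icc (0 : ℝ) 1) (S : Finset (Edge d))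
    (g : S → Bool) :
    (P q (S.restrict ⁻¹' ({g} : Set (S → Bool)))).toReal = bernoulliWeight q g := by
  have hcyl : S.restrict ⁻¹' ({g} : Set (S → Bool)) =
      {ω : Config d | ∀ e ∈ S, ω e = extendByFalse S g e} := by
    ext ω
    simp only [Set.mem_preimage, Set.mem_singleton_iff, funext_iff, Subtype.forall,
      Finset.restrict, Set.mem_ofPred_eq]
    exact forall₂_congr fun e he => by simp [extendByFalse, he]
  rw [hcyl, hP.2 q hq, toReal_prod, bernoulliWeight, ← prod_coe_sort S]
  refine prod_congr rfl fun i _ => ?_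
  rw [extendByFalse_apply_coe, toReal_ofReal (by cases g i <;> simp [hq.1, hq.2])]
  rfl

theorem IsBernoulliFamily.toReal_measure_eq_bernoulliProb {P : ℝ → Measure (Config d)}
    (hP : IsBernoulliFamily P) {q : ℝ} (hq : q ∈ Set.Icc (0 : ℝ) 1) {A : Set (Config d)}
    {S : Finset (Edge d)} (hS : EventDependsOn A S) :
    (P q A).toReal = bernoulliProb q (extendByFalse S ⁻¹' A) := by
  classical
  have := hP.1 q
  have hfib := sum_measure_preimage_singleton (μ := P q)
    (univ.filter (· ∈ extendByFalse S ⁻¹' A)) fun g _ =>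
      S.measurable_restrict (measurableSet_singleton g)
  rw [coe_filter_univ, Set.ofPred_mem_eq, ← hS.eq_preimage_restrict] at hfib
  rw [← hfib, toReal_sum fun g _ => measure_ne_top _ _, bernoulliProb, sum_filter]
  refine sum_congr rfl fun g _ => ?_
  rw [Set.indicator_apply]
  split_ifs
  exacts [hP.toReal_measure_preimage_restrict hq S g, rfl]

end Percolation

theorem russo_general {d : ℕ} (P : ℝ → Measure (Config d)) (hP : IsBernoulliFamily P)
    (A : Set (Config d)) (hinc : IncreasingEvent A)
    (S : Finset (Edge d)) (hS : EventDependsOn A S)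
    (p : ℝ) (hp : p ∈ Set.Icc (0 : ℝ) 1) :
    HasDerivWithinAt (fun q => (P q A).toReal)
      (∑' e : Edge d, (P p (Pivotal A e)).toReal) (Set.Icc 0 1) p := by
  have hprob (q) (hq : q ∈ Set.Icc (0 : ℝ) 1) := hP.toReal_measure_eq_bernoulliProb hq hS
  have hpivotal : ∑' e, (P p (Pivotal A e)).toReal =
      ∑ i : S, bernoulliProb p (pivotalSet (extendByFalse S ⁻¹' A) i) := by
    rw [tsum_eq_sum fun e he => by simp [hS.pivotal_eq_empty he], ← sum_coe_sort S]
    refine sum_congr rfl fun i _ => ?_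
    rw [hP.toReal_measure_eq_bernoulliProb hp (hS.pivotal i), preimage_extendByFalse_pivotal]
  have hB : IsUpperSet (extendByFalse S ⁻¹' A) :=
    IsUpperSet.preimage hinc (monotone_extendByFalse S)
  rw [hpivotal]
  exact (hasDerivAt_bernoulliProb hB p).hasDerivWithinAt.congr hprob (hprob p hp)

/-- Russo's formula: for an increasing event `A` depending on finitely many
edges, `d/dp P_p[A] = Σ_e P_p[e is pivotal for A]`. -/
theorem russo {d : ℕ} (P : ℝ → Measure (Config d)) (hP : IsBernoulliFamily P)
    (A : Set (Config d)) (hA : MeasurableSet A) (hinc : IncreasingEvent A)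
    (S : Finset (Edge d)) (hS : EventDependsOn A S)
    (p : ℝ) (hp : p ∈ Set.Icc (0 : ℝ) 1) :
    HasDerivWithinAt (fun q => (P q A).toReal)
      (∑' e : Edge d, (P p (Pivotal A e)).toReal) (Set.Icc 0 1) p :=
  russo_general P hP A hinc S hS p hp
end

section
/- (Monotone OSSS inequality) Let Ω = {0,1}^I for finite I with a product of Bernoulli measures, f : Ω → [0,1] nondecreasing, and T an algorithm determining f. Then Var(f) ≤ 2 Σ_{i∈I} δ_i(T)·Cov(ω_i, f). -/
open MeasureTheory ProbabilityTheory ENNReal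

/-- The Bernoulli(`p`) measure on `{0,1}`. -/
noncomputable def bern (p : ℝ≥0∞) : Measure Bool :=
  p • Measure.dirac true + (1 - p) • Measure.dirac false

/-- A decision tree over the product space `Π i, Ω i`: at each internal node it
queries a coordinate and branches on its value; leaves carry the output. -/
inductive DTree (I : Type*) (Ω : I → Type*) (α : Type*) where
  | leaf : α → DTree I Ω α
  | node : (i : I) → ((Ω i) → DTree I Ω α) → DTree I Ω α

/-- The output computed by a decision tree on the input `ω`. -/
def DTree.eval {I : Type*} {Ω : I → Type*} {α : Type*} :
    DTree I Ω α → (∀ i, Ω i) → α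
  | .leaf a, _ => a
  | .node i c, ω => (c (ω i)).eval ω

/-- The set of coordinates revealed (queried) by the tree on the input `ω`. -/
def DTree.revealed {I : Type*} {Ω : I → Type*} {α : Type*} :
    DTree I Ω α → (∀ i, Ω i) → Set I
  | .leaf _, _ => ∅
  | .node i c, ω => insert i ((c (ω i)).revealed ω)

/-!
Run the tree on `x` and replace the coordinates it reveals by those of an independent copy `y`.
The resulting hybrid is again a sample of the product measure, and it is independent of `f x`,
since the revealed values of `x` are all that `f x` depends on and they have been thrown away.
Hence `Var f = E[f x * (f x - f hybrid)] ≤ E|f x - f hybrid|` for `|f| ≤ 1`. Walking down the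
tree and swapping in one revealed coordinate at a time bounds this by `∑ i, δ_i * Inf_i`, where
`Inf_i = E|f x - f x'|` for `x'` equal to `x` with coordinate `i` resampled. For monotone `f`,
`Inf_i = 2 p_i (1 - p_i) E[f(x, x_i = 1) - f(x, x_i = 0)] = 2 Cov(ω_i, f)`.
The integrals against `Measure.pi` are finite sums against the product weights `BoolCube.weight`,
and the whole argument is carried out with those sums.
-/

lemma Equiv.update_funSplitAt_symm {α β : Type*} [DecidableEq α] (j : α) (b c : β)
    (r : {k // k ≠ j} → β) :
    Function.update ((Equiv.funSplitAt j β).symm (b, r)) j c =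
      (Equiv.funSplitAt j β).symm (c, r) := by
  ext k
  by_cases hk : k = j
  · subst hk; simp [Equiv.funSplitAt, Equiv.piSplitAt]
  · simp [Equiv.funSplitAt, Equiv.piSplitAt, hk]

namespace DTree

variable {I : Type*} {α : Type*}

open Function

open Classical in
noncomputable def hybrid (T : DTree I (fun _ => Bool) α) (x y : I → Bool) : I → Bool :=
  fun i => if i ∈ T.revealed x then y i else x i

lemma hybrid_leaf (a : α) (x y : I → Bool) :
    (leaf a : DTree I (fun _ => Bool) α).hybrid x y = x := by
  ext i; simp [hybrid, revealed]

variable [DecidableEq I]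

def restrict (j : I) (b : Bool) : DTree I (fun _ => Bool) α → DTree I (fun _ => Bool) α
  | leaf a => leaf a
  | node k c => if k = j then restrict j b (c b) else node k fun v => restrict j b (c v)

def numNodes : DTree I (fun _ => Bool) α → ℕ
  | leaf _ => 0
  | node _ c => numNodes (c true) + numNodes (c false) + 1

lemma numNodes_restrict_le (j : I) (b : Bool) (T : DTree I (fun _ => Bool) α) :
    (T.restrict j b).numNodes ≤ T.numNodes := by
  induction T with
  | leaf a => simp [restrict]
  | node k c ih =>
    by_cases h : k = j
    · subst h
      have := ih b
      cases b <;> simp [restrict, numNodes] <;> omega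
    · have := ih true
      have := ih false
      simp only [restrict, if_neg h, numNodes]
      omega

lemma eval_restrict (j : I) (b : Bool) (T : DTree I (fun _ => Bool) α) (x : I → Bool) :
    (T.restrict j b).eval x = T.eval (update x j b) := by
  induction T generalizing x with
  | leaf a => rfl
  | node k c ih =>
    by_cases h : k = j
    · subst h
      simp [restrict, eval, ih]
    · simp only [restrict, if_neg h, eval, update_of_ne h, ih]

lemma revealed_restrict (j : I) (b : Bool) (T : DTree I (fun _ => Bool) α) (x : I → Bool) :
    (T.restrict j b).revealed x = T.revealed (update x j b) \ {j} := by
  induction T generalizing x with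
  | leaf a => simp [restrict, revealed]
  | node k c ih =>
    by_cases h : k = j
    · subst h
      simp [restrict, revealed, ih]
    · simp only [restrict, if_neg h, revealed, update_of_ne h, ih]
      rw [Set.insert_sdiff_of_notMem _ (by simpa using h)]

/-- Strong induction along `restrict`: a node's subtrees may query its coordinate again, so the
induction step passes to the restricted subtrees, which are smaller. -/
@[elab_as_elim]
theorem restrict_induction {P : DTree I (fun _ => Bool) α → Prop} (leaf : ∀ a, P (leaf a))
    (node : ∀ j c, (∀ b, P ((c b).restrict j b)) → P (node j c))
    (T : DTree I (fun _ => Bool) α) : P T := by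
  induction h : T.numNodes using Nat.strong_induction_on generalizing T with
  | _ n ih =>
    cases T with
    | leaf a => exact leaf a
    | node j c =>
      refine node j c fun b => ih _ ?_ _ rfl
      have := numNodes_restrict_le j b (c b)
      cases b <;> simp only [numNodes] at h <;> omega

lemma hybrid_restrict_update (j : I) (b : Bool) (T : DTree I (fun _ => Bool) α) (z y : I → Bool)
    (c : Bool) : (T.restrict j b).hybrid z (update y j c) = (T.restrict j b).hybrid z y := by
  ext i
  by_cases hi : i = j
  · subst hi; simp [hybrid, revealed_restrict]
  · simp [hybrid, update_of_ne hi]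

lemma hybrid_node (j : I) (c : Bool → DTree I (fun _ => Bool) α) (x y : I → Bool) :
    (node j c).hybrid x y = ((c (x j)).restrict j (x j)).hybrid (update x j (y j)) y := by
  ext i
  by_cases hi : i = j
  · subst hi; simp [hybrid, revealed, revealed_restrict]
  · have hrev : i ∈ (node j c).revealed x ↔
        i ∈ ((c (x j)).restrict j (x j)).revealed (update x j (y j)) := by
      simp [revealed, revealed_restrict, hi]
    simp only [hybrid, update_of_ne hi]
    split_ifs <;> tauto

end DTree

namespace BoolCube

open Function

variable {I : Type*} [Fintype I]

def weight (q : I → ℝ) (x : I → Bool) : ℝ := ∏ i, if x i then q i else 1 - q i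

lemma weight_nonneg {q : I → ℝ} (hq0 : ∀ i, 0 ≤ q i) (hq1 : ∀ i, q i ≤ 1) (x : I → Bool) :
    0 ≤ weight q x :=
  Finset.prod_nonneg fun i _ => by split <;> linarith [hq0 i, hq1 i]

variable [DecidableEq I]

def expect (q : I → ℝ) (g : (I → Bool) → ℝ) : ℝ := ∑ x, weight q x * g x

variable {q : I → ℝ}

lemma sum_weight (q : I → ℝ) : ∑ x, weight q x = 1 := by
  simp [weight, ← Fintype.prod_sum (fun i (b : Bool) => if b then q i else 1 - q i)]

lemma expect_add (g h : (I → Bool) → ℝ) :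
    expect q (fun x => g x + h x) = expect q g + expect q h := by
  simp only [expect, mul_add, Finset.sum_add_distrib]

lemma expect_sub (g h : (I → Bool) → ℝ) :
    expect q (fun x => g x - h x) = expect q g - expect q h := by
  simp only [expect, mul_sub, Finset.sum_sub_distrib]

lemma expect_const_mul (c : ℝ) (g : (I → Bool) → ℝ) :
    expect q (fun x => c * g x) = c * expect q g := by
  simp only [expect, Finset.mul_sum]
  exact Finset.sum_congr rfl fun x _ => by ring

lemma expect_const (q : I → ℝ) (c : ℝ) : expect q (fun _ => c) = c := by
  rw [expect, ← Finset.sum_mul, sum_weight, one_mul]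

lemma expect_mono (hq0 : ∀ i, 0 ≤ q i) (hq1 : ∀ i, q i ≤ 1) {g h : (I → Bool) → ℝ}
    (hgh : ∀ x, g x ≤ h x) : expect q g ≤ expect q h :=
  Finset.sum_le_sum fun x _ => mul_le_mul_of_nonneg_left (hgh x) (weight_nonneg hq0 hq1 x)

lemma expect_comm (Ψ : (I → Bool) → (I → Bool) → ℝ) :
    expect q (fun x => expect q fun y => Ψ x y) = expect q fun y => expect q fun x => Ψ x y := by
  simp only [expect, Finset.mul_sum]
  rw [Finset.sum_comm]
  exact Finset.sum_congr rfl fun _ _ => Finset.sum_congr rfl fun _ _ => by ring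

lemma weight_funSplitAt_symm (q : I → ℝ) (j : I) (b : Bool) (r : {k // k ≠ j} → Bool) :
    weight q ((Equiv.funSplitAt j Bool).symm (b, r)) =
      (if b then q j else 1 - q j) * ∏ k : {k // k ≠ j}, if r k then q k else 1 - q k := by
  rw [weight, Fintype.prod_eq_mul_prod_subtype_ne _ j]
  congr 1
  · simp [Equiv.funSplitAt, Equiv.piSplitAt]
  · exact Fintype.prod_congr _ _ fun k => by simp [Equiv.funSplitAt, Equiv.piSplitAt, k.2]

lemma expect_eq_expect_resample (q : I → ℝ) (j : I) (H : (I → Bool) → ℝ) :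
    expect q H = expect q fun x =>
      q j * H (update x j true) + (1 - q j) * H (update x j false) := by
  simp only [expect, ← (Equiv.funSplitAt j Bool).symm.sum_comp, Fintype.sum_prod_type_right,
    Fintype.sum_bool, weight_funSplitAt_symm, Equiv.update_funSplitAt_symm]
  exact Finset.sum_congr rfl fun _ _ => by simp only [if_true, Bool.false_eq_true, if_false]; ring

lemma expect_condition_coord (q : I → ℝ) (j : I) (G : Bool → (I → Bool) → ℝ)
    (hG : ∀ b x c, G b (update x j c) = G b x) :
    expect q (fun x => G (x j) x) = q j * expect q (G true) + (1 - q j) * expect q (G false) := by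
  rw [expect_eq_expect_resample q j, expect_add, expect_const_mul, expect_const_mul]
  simp only [update_self, hG]

lemma expect_coord (q : I → ℝ) (j : I) (h : Bool → ℝ) :
    expect q (fun x => h (x j)) = q j * h true + (1 - q j) * h false := by
  rw [expect_condition_coord q j (fun b _ => h b) fun _ _ _ => rfl, expect_const, expect_const]

lemma expect_expect_update (q : I → ℝ) (j : I) (Ψ : (I → Bool) → (I → Bool) → ℝ)
    (hΨ : ∀ z y c, Ψ z (update y j c) = Ψ z y) :
    (expect q fun x => expect q fun y => Ψ (update x j (y j)) y) =
      expect q fun x => expect q fun y => Ψ x y := by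
  rw [expect_comm, expect_comm Ψ,
    expect_condition_coord q j (fun b y => expect q fun x => Ψ (update x j b) y)
      fun b y c => by simp only [hΨ]]
  simp only [expect_eq_expect_resample q j (Ψ · _), expect_add, expect_const_mul]

/-- Conditioning on `x j` and then resampling it: the two steps that descend one level in a
decision tree. -/
lemma expect_expect_condition_update (q : I → ℝ) (j : I)
    (Ψ : Bool → (I → Bool) → (I → Bool) → ℝ) (hΨ : ∀ b z y c, Ψ b z (update y j c) = Ψ b z y) :
    (expect q fun x => expect q fun y => Ψ (x j) (update x j (y j)) y) =
      q j * (expect q fun x => expect q fun y => Ψ true x y) +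
        (1 - q j) * expect q fun x => expect q fun y => Ψ false x y := by
  rw [expect_condition_coord q j (fun b x => expect q fun y => Ψ b (update x j (y j)) y)
      fun b x c => by simp only [update_idem],
    expect_expect_update q j _ (hΨ true), expect_expect_update q j _ (hΨ false)]

variable {α : Type*}

open DTree

noncomputable def revealment (q : I → ℝ) (T : DTree I (fun _ => Bool) α) (i : I) : ℝ :=
  expect q fun x => (T.revealed x).indicator 1 i

def influence (q : I → ℝ) (F : (I → Bool) → ℝ) (i : I) : ℝ :=
  expect q fun x => expect q fun y => |F x - F (update x i (y i))|

lemma revealment_leaf (q : I → ℝ) (a : α) (i : I) : revealment q (leaf a) i = 0 := by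
  simp [revealment, revealed, expect]

lemma revealment_node (q : I → ℝ) (j : I) (c : Bool → DTree I (fun _ => Bool) α) (i : I) :
    revealment q (node j c) i = (if i = j then 1 else 0) +
      (q j * revealment q ((c true).restrict j true) i +
        (1 - q j) * revealment q ((c false).restrict j false) i) := by
  set G : Bool → (I → Bool) → ℝ := fun b x => (((c b).restrict j b).revealed x).indicator 1 i
  have hG : ∀ b x c, G b (update x j c) = G b x := by
    simp only [G, revealed_restrict, update_idem, implies_true]
  have hsplit : (fun x => ((node j c).revealed x).indicator (1 : I → ℝ) i) =
      fun x => (if i = j then 1 else 0) + G (x j) x := by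
    ext x
    simp only [G, revealed, revealed_restrict, update_eq_self]
    by_cases hi : i = j
    · simp [hi]
    · simpa [hi] using Set.indicator_eq_indicator (by simp [hi]) rfl
  rw [revealment, hsplit, expect_add, expect_const, expect_condition_coord q j G hG]
  rfl

lemma expect_eval_node (q : I → ℝ) (j : I) (c : Bool → DTree I (fun _ => Bool) ℝ) :
    expect q (node j c).eval = q j * expect q ((c true).restrict j true).eval +
      (1 - q j) * expect q ((c false).restrict j false).eval := by
  rw [← expect_condition_coord q j (fun b => ((c b).restrict j b).eval)
    fun b x c => by simp only [eval_restrict, update_idem]]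
  simp only [eval_restrict, update_eq_self]
  rfl

lemma expect_expect_eval_mul_hybrid (q : I → ℝ) (g : (I → Bool) → ℝ)
    (T : DTree I (fun _ => Bool) ℝ) :
    (expect q fun x => expect q fun y => T.eval x * g (T.hybrid x y)) =
      expect q T.eval * expect q g := by
  induction T using restrict_induction with
  | leaf a => simp only [hybrid_leaf, DTree.eval, expect_const, expect_const_mul]
  | node j c ih =>
    have hpt : ∀ x y, (node j c).eval x * g ((node j c).hybrid x y) =
        ((c (x j)).restrict j (x j)).eval (update x j (y j)) *
          g (((c (x j)).restrict j (x j)).hybrid (update x j (y j)) y) := by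
      intro x y
      rw [hybrid_node, eval_restrict, update_idem, update_eq_self]
      rfl
    simp only [hpt]
    rw [expect_expect_condition_update q j
        (fun b z y => ((c b).restrict j b).eval z * g (((c b).restrict j b).hybrid z y))
        fun b z y c => by rw [hybrid_restrict_update],
      ih true, ih false, expect_eval_node]
    ring

lemma expect_expect_abs_sub_hybrid_le (hq0 : ∀ i, 0 ≤ q i) (hq1 : ∀ i, q i ≤ 1)
    (F : (I → Bool) → ℝ) (T : DTree I (fun _ => Bool) α) :
    (expect q fun x => expect q fun y => |F x - F (T.hybrid x y)|) ≤
      ∑ i, revealment q T i * influence q F i := by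
  induction T using restrict_induction with
  | leaf a => simp [hybrid_leaf, revealment_leaf, expect_const]
  | node j c ih =>
    set Ψ : Bool → (I → Bool) → (I → Bool) → ℝ :=
      fun b z y => |F z - F (((c b).restrict j b).hybrid z y)|
    have hΨ : ∀ b z y c, Ψ b z (update y j c) = Ψ b z y := by
      simp only [Ψ, hybrid_restrict_update, implies_true]
    have hqj0 : 0 ≤ q j := hq0 j
    have hqj1 : 0 ≤ 1 - q j := sub_nonneg.2 (hq1 j)
    calc (expect q fun x => expect q fun y => |F x - F ((node j c).hybrid x y)|)
        ≤ expect q fun x => expect q fun y =>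
            |F x - F (update x j (y j))| + Ψ (x j) (update x j (y j)) y :=
          expect_mono hq0 hq1 fun x => expect_mono hq0 hq1 fun y => by
            rw [hybrid_node]; exact abs_sub_le _ _ _
      _ = influence q F j + (q j * (expect q fun x => expect q fun y => Ψ true x y) +
            (1 - q j) * expect q fun x => expect q fun y => Ψ false x y) := by
          simp only [expect_add]
          rw [expect_expect_condition_update q j Ψ hΨ]
          rfl
      _ ≤ influence q F j +
            (q j * ∑ i, revealment q ((c true).restrict j true) i * influence q F i +
              (1 - q j) * ∑ i, revealment q ((c false).restrict j false) i * influence q F i) := by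
          gcongr
          exacts [ih true, ih false]
      _ = ∑ i, revealment q (node j c) i * influence q F i := by
          simp only [revealment_node, add_mul, Finset.sum_add_distrib, ite_mul, one_mul, zero_mul,
            Finset.sum_ite_eq', Finset.mem_univ, if_true, Finset.mul_sum, mul_assoc]

theorem variance_le_sum_revealment_mul_influence (hq0 : ∀ i, 0 ≤ q i) (hq1 : ∀ i, q i ≤ 1)
    (T : DTree I (fun _ => Bool) ℝ) (hT : ∀ x, |T.eval x| ≤ 1) :
    (expect q fun x => (T.eval x - expect q T.eval) ^ 2) ≤
      ∑ i, revealment q T i * influence q T.eval i := by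
  set f := T.eval
  set m := expect q f
  have hsq : ∀ x, (f x - m) ^ 2 = f x * f x + -2 * m * f x + m * m := fun x => by ring
  have hvar : (expect q fun x => (f x - m) ^ 2) =
      expect q fun x => expect q fun y => f x * (f x - f (T.hybrid x y)) := by
    simp only [mul_sub, expect_sub, expect_const]
    rw [expect_expect_eval_mul_hybrid]
    simp only [hsq, expect_add, expect_const_mul, expect_const]
    ring
  calc (expect q fun x => (f x - m) ^ 2)
      = expect q fun x => expect q fun y => f x * (f x - f (T.hybrid x y)) := hvar
    _ ≤ expect q fun x => expect q fun y => |f x - f (T.hybrid x y)| :=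
        expect_mono hq0 hq1 fun x => expect_mono hq0 hq1 fun y =>
          (le_abs_self _).trans (by rw [abs_mul]; exact mul_le_of_le_one_left (abs_nonneg _) (hT x))
    _ ≤ _ := expect_expect_abs_sub_hybrid_le hq0 hq1 f T

lemma influence_eq (q : I → ℝ) (F : (I → Bool) → ℝ) (i : I) :
    influence q F i =
      2 * q i * (1 - q i) * expect q fun x => |F (update x i true) - F (update x i false)| := by
  calc influence q F i
      = expect q fun x => q i * |F x - F (update x i true)| +
          (1 - q i) * |F x - F (update x i false)| := by
        unfold influence
        congr 1
        funext x
        exact expect_coord q i fun b => |F x - F (update x i b)|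
    _ = expect q fun x => 2 * q i * (1 - q i) * |F (update x i true) - F (update x i false)| := by
        rw [expect_eq_expect_resample q i]
        congr 1
        funext x
        simp only [update_idem, sub_self, abs_zero]
        rw [abs_sub_comm (F (update x i false))]
        ring
    _ = _ := expect_const_mul _ _

lemma expect_ite_coord_sub (q : I → ℝ) (F : (I → Bool) → ℝ) (i : I) :
    expect q (fun x => if x i then F x else 0) - q i * expect q F =
      q i * (1 - q i) * expect q fun x => F (update x i true) - F (update x i false) := by
  rw [expect_eq_expect_resample q i (fun x => if x i then F x else 0),
    expect_eq_expect_resample q i F]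
  simp only [update_self, if_true, Bool.false_eq_true, if_false, mul_zero, add_zero,
    expect_const_mul, expect_add, expect_sub]
  ring

lemma influence_eq_of_monotone {F : (I → Bool) → ℝ} (hF : Monotone F) (q : I → ℝ) (i : I) :
    influence q F i = 2 * (expect q (fun x => if x i then F x else 0) - q i * expect q F) := by
  have hdiff : ∀ x, |F (update x i true) - F (update x i false)| =
      F (update x i true) - F (update x i false) := fun x =>
    abs_of_nonneg (sub_nonneg.2 (hF (update_mono (Bool.false_le true))))
  rw [influence_eq, expect_ite_coord_sub]
  simp only [hdiff]
  ring

end BoolCube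

section Bridge

open BoolCube

variable {I : Type*} [Fintype I] [DecidableEq I]

lemma isProbabilityMeasure_bern {p : ℝ≥0∞} (hp : p ≤ 1) : IsProbabilityMeasure (bern p) :=
  ⟨by simp [bern, add_tsub_cancel_of_le hp]⟩

lemma bern_singleton_toReal {p : ℝ≥0∞} (hp : p ≤ 1) (b : Bool) :
    (bern p {b}).toReal = if b then p.toReal else 1 - p.toReal := by
  cases b <;> simp [bern, ENNReal.toReal_sub_of_le hp ENNReal.one_ne_top]

lemma integral_pi_bern {p : I → ℝ≥0∞} (hp : ∀ i, p i ≤ 1) (g : (I → Bool) → ℝ) :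
    ∫ x, g x ∂(Measure.pi fun i => bern (p i)) = expect (fun i => (p i).toReal) g := by
  have := fun i => isProbabilityMeasure_bern (hp i)
  rw [integral_fintype Integrable.of_finite]
  simp [expect, weight, measureReal_def, ENNReal.toReal_prod, bern_singleton_toReal (hp _)]

lemma measure_pi_bern_toReal {p : I → ℝ≥0∞} (hp : ∀ i, p i ≤ 1) (s : Set (I → Bool)) :
    ((Measure.pi fun i => bern (p i)) s).toReal =
      expect (fun i => (p i).toReal) (s.indicator 1) := by
  rw [← measureReal_def, ← integral_indicator_one (Set.toFinite s).measurableSet,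
    integral_pi_bern hp]

lemma measure_pi_bern_revealed_toReal {α : Type*} {p : I → ℝ≥0∞} (hp : ∀ i, p i ≤ 1)
    (T : DTree I (fun _ => Bool) α) (i : I) :
    ((Measure.pi fun i => bern (p i)) {ω | i ∈ T.revealed ω}).toReal =
      revealment (fun i => (p i).toReal) T i := by
  rw [measure_pi_bern_toReal hp]
  exact congrArg _ (funext fun x => Set.indicator_eq_indicator Iff.rfl rfl)

lemma measure_pi_bern_coord_toReal {p : I → ℝ≥0∞} (hp : ∀ i, p i ≤ 1) (i : I) :
    ((Measure.pi fun i => bern (p i)) {ω | ω i = true}).toReal = (p i).toReal := by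
  have hind : {ω : I → Bool | ω i = true}.indicator 1 = fun x => if x i then (1 : ℝ) else 0 := by
    ext x
    by_cases h : x i <;> simp [h]
  rw [measure_pi_bern_toReal hp, hind, expect_coord _ i fun b => if b then (1 : ℝ) else 0]
  simp

end Bridge

open BoolCube in
theorem osss_monotone_general {I : Type*} [Fintype I]
    (p : I → ℝ≥0∞) (hp : ∀ i, p i ≤ 1)
    (f : (I → Bool) → ℝ) (hmono : Monotone f)
    (hf01 : ∀ ω, f ω ∈ Set.Icc (0 : ℝ) 1)
    (T : DTree I (fun _ => Bool) ℝ) (hT : ∀ ω, T.eval ω = f ω) :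
    (∫ ω, (f ω - ∫ ω', f ω' ∂(Measure.pi fun i => bern (p i))) ^ 2
        ∂(Measure.pi fun i => bern (p i))) ≤
      2 * ∑ i : I, ((Measure.pi fun i => bern (p i)) {ω | i ∈ T.revealed ω}).toReal *
        ((∫ ω, (if ω i then f ω else 0) ∂(Measure.pi fun i => bern (p i))) -
          ((Measure.pi fun i => bern (p i)) {ω | ω i = true}).toReal *
            ∫ ω, f ω ∂(Measure.pi fun i => bern (p i))) := by
  classical
  obtain rfl : T.eval = f := funext hT
  set q : I → ℝ := fun i => (p i).toReal
  have hq0 : ∀ i, 0 ≤ q i := fun i => ENNReal.toReal_nonneg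
  have hq1 : ∀ i, q i ≤ 1 := fun i =>
    ENNReal.toReal_le_of_le_ofReal zero_le_one (by simpa using hp i)
  have hbound : ∀ x, |T.eval x| ≤ 1 := fun x => abs_le.2 ⟨by linarith [(hf01 x).1], (hf01 x).2⟩
  simp only [integral_pi_bern hp]
  refine (variance_le_sum_revealment_mul_influence hq0 hq1 T hbound).trans_eq ?_
  rw [Finset.mul_sum]
  refine Finset.sum_congr rfl fun i _ => ?_
  rw [measure_pi_bern_revealed_toReal hp, measure_pi_bern_coord_toReal hp,
    influence_eq_of_monotone hmono]
  ring

/-- The monotone OSSS inequality on `{0,1}^I` with a product of Bernoulli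
measures: if a decision tree `T` computes a nondecreasing `f` with values in
`[0,1]`, then `Var(f) ≤ 2 Σ_i δ_i(T)·Cov(ω_i, f)`. -/
theorem osss_monotone {I : Type*} [Fintype I] [DecidableEq I]
    (p : I → ℝ≥0∞) (hp : ∀ i, p i ≤ 1)
    (f : (I → Bool) → ℝ) (hmono : Monotone f)
    (hf01 : ∀ ω, f ω ∈ Set.Icc (0 : ℝ) 1)
    (T : DTree I (fun _ => Bool) ℝ) (hT : ∀ ω, T.eval ω = f ω) :
    (∫ ω, (f ω - ∫ ω', f ω' ∂(Measure.pi fun i => bern (p i))) ^ 2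
        ∂(Measure.pi fun i => bern (p i))) ≤
      2 * ∑ i : I, ((Measure.pi fun i => bern (p i)) {ω | i ∈ T.revealed ω}).toReal *
        ((∫ ω, (if ω i then f ω else 0) ∂(Measure.pi fun i => bern (p i))) -
          ((Measure.pi fun i => bern (p i)) {ω | ω i = true}).toReal *
            ∫ ω, f ω ∂(Measure.pi fun i => bern (p i))) :=
  osss_monotone_general p hp f hmono hf01 T hT
end
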